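/- Let $N \geq 2$ and $f_N(y,z) = (yz)^{-1/2}\chi_{[1,N]}(y)\chi_{[1,N]}(z)$, a product-type function on $\mathbb{R}^2$ with $\|f_N\|_{L^2(\mathbb{R}^2)} = \log N$. Then the linear Kakeya maximal function at fixed scale, $M_{\mathcal{R}_{1,N}}f(x) = \sup_{R \in \mathcal{R}_{1,N},\, x \in R} |R|^{-1}\int_R |f|$, satisfies the pointwise lower bound $M_{\mathcal{R}_{1,N}}(f_N)(x) \geq c\, \frac{\log(k/4)}{(Nk)^{1/2}}$ for all $x = (x_1, x_2)$ with $|x| \leq N$ and $\frac{k-1}{N}x_1 \leq x_2 < \frac{k}{N}x_1$, $5 \leq k \leq N$. Consequently $\|M_{\mathcal{R}_{1,N}} f_N\|_{L^2}^2 \geq c (\log N)^3$, so $\|M_{\mathcal{R}_{1,N}} f_N\|_{L^2} \geq c (\log N)^{1/2}\|f_N\|_{L^2}$. -/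

import Mathlib

open MeasureTheory Set Real
open scoped ENNReal

noncomputable section

/-- The rectangle with a vertex at `z`, side of length `a` along the unit vector `e`
and side of length `b` along the perpendicular vector `(-e.2, e.1)`. -/
def rectSet (e z : ℝ × ℝ) (a b : ℝ) : Set (ℝ × ℝ) :=
  (fun p : ℝ × ℝ => (z.1 + p.1 * e.1 - p.2 * e.2, z.2 + p.1 * e.2 + p.2 * e.1)) ''
    (Set.Icc 0 a ×ˢ Set.Icc 0 b)

/-- One-dimensional uncentered Hardy–Littlewood maximal function. -/
def maxHL (f : ℝ → ℝ) (x : ℝ) : ℝ≥0∞ :=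
  ⨆ (a : ℝ) (b : ℝ) (_ : a < x) (_ : x < b),
    (ENNReal.ofReal (b - a))⁻¹ * ∫⁻ y in Set.Ioo a b, ENNReal.ofReal |f y|

/-- Euclidean norm on `ℝ × ℝ`. -/
def nrm2 (y : ℝ × ℝ) : ℝ := Real.sqrt (y.1 ^ 2 + y.2 ^ 2)

/-- The fixed-scale linear Kakeya maximal function over `1 × N` rectangles. -/
def linKak (N : ℝ) (f : ℝ × ℝ → ℝ) (x : ℝ × ℝ) : ℝ≥0∞ :=
  ⨆ (e : ℝ × ℝ) (z : ℝ × ℝ) (_ : e.1 ^ 2 + e.2 ^ 2 = 1) (_ : x ∈ rectSet e z N 1),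
    (volume (rectSet e z N 1))⁻¹ * ∫⁻ y in rectSet e z N 1, ENNReal.ofReal |f y|

def rotMap (e : ℝ × ℝ) : (ℝ × ℝ) →ₗ[ℝ] (ℝ × ℝ) where
  toFun p := (p.1 * e.1 - p.2 * e.2, p.1 * e.2 + p.2 * e.1)
  map_add' p q := by simp [Prod.ext_iff]; constructor <;> ring
  map_smul' c p := by simp [Prod.ext_iff]; constructor <;> ring

lemma rotMap_det (e : ℝ × ℝ) (he : e.1 ^ 2 + e.2 ^ 2 = 1) :
    LinearMap.det (rotMap e) = 1 := by
  have : LinearMap.det (rotMap e) =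
      Matrix.det (LinearMap.toMatrix (Module.Basis.finTwoProd ℝ) (Module.Basis.finTwoProd ℝ) (rotMap e)) :=
    (LinearMap.det_toMatrix _ _).symm
  rw [this, Matrix.det_fin_two]
  simp [LinearMap.toMatrix_apply, Module.Basis.coe_finTwoProd_repr, Module.Basis.finTwoProd_zero,
    Module.Basis.finTwoProd_one, rotMap]
  nlinarith [he]

lemma volume_rectSet (e z : ℝ × ℝ) (a b : ℝ) (he : e.1 ^ 2 + e.2 ^ 2 = 1) :
    volume (rectSet e z a b) = ENNReal.ofReal a * ENNReal.ofReal b := by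
  have h1 : rectSet e z a b = (fun x : ℝ × ℝ => z + x) '' (rotMap e '' (Set.Icc 0 a ×ˢ Set.Icc 0 b)) := by
    rw [Set.image_image]
    unfold rectSet
    have : (fun p : ℝ × ℝ => (z.1 + p.1 * e.1 - p.2 * e.2, z.2 + p.1 * e.2 + p.2 * e.1))
        = (fun p : ℝ × ℝ => z + rotMap e p) := by
      funext p
      simp only [rotMap, LinearMap.coe_mk, AddHom.coe_mk, Prod.ext_iff, Prod.fst_add, Prod.snd_add]
      constructor <;> ring
    rw [this]
  rw [h1]
  have h2 : (fun x : ℝ × ℝ => z + x) '' (rotMap e '' (Set.Icc 0 a ×ˢ Set.Icc 0 b))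
      = (fun x : ℝ × ℝ => -z + x) ⁻¹' (rotMap e '' (Set.Icc 0 a ×ˢ Set.Icc 0 b)) := by
    ext x
    simp only [Set.mem_image, Set.mem_preimage]
    constructor
    · rintro ⟨y, hy, rfl⟩; simpa using hy
    · intro h; exact ⟨-z + x, h, by abel⟩
  rw [h2, measure_preimage_add, Measure.addHaar_image_linearMap, rotMap_det e he,
    Measure.volume_eq_prod, Measure.prod_prod, Real.volume_Icc, Real.volume_Icc]
  simp
lemma mem_rectSet {e z x : ℝ × ℝ} {a b s t : ℝ} (hs : s ∈ Set.Icc 0 a) (ht : t ∈ Set.Icc 0 b)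
    (hx1 : x.1 = z.1 + s * e.1 - t * e.2) (hx2 : x.2 = z.2 + s * e.2 + t * e.1) :
    x ∈ rectSet e z a b :=
  ⟨(s, t), ⟨hs, ht⟩, by simp [← hx1, ← hx2]⟩

lemma lint_const_div (c a b : ℝ) (hc : 0 ≤ c) (ha : 0 < a) (hab : a ≤ b) :
    ∫⁻ y in Set.Icc a b, ENNReal.ofReal (c / y) = ENNReal.ofReal (c * Real.log (b / a)) := by
  rw [← setLIntegral_congr Ioc_ae_eq_Icc]
  have hint : IntegrableOn (fun y : ℝ => c / y) (Set.Ioc a b) := by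
    apply (ContinuousOn.integrableOn_Icc ?_).mono_set Set.Ioc_subset_Icc_self
    exact continuousOn_const.div continuousOn_id
      (fun x hx => ne_of_gt (lt_of_lt_of_le ha hx.1))
  rw [← ofReal_integral_eq_lintegral_ofReal hint]
  · rw [← intervalIntegral.integral_of_le hab]
    congr 1
    simp only [div_eq_mul_inv]
    rw [intervalIntegral.integral_const_mul, integral_inv_of_pos ha (lt_of_lt_of_le ha hab),
      div_eq_mul_inv]
  · refine (ae_restrict_iff' measurableSet_Ioc).2 (Filter.Eventually.of_forall fun y hy => ?_)
    exact div_nonneg hc (le_of_lt (lt_of_lt_of_le ha hy.1.le))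

lemma lint_logsq (d B : ℝ) (hd : 0 ≤ d) (hB : 5 ≤ B) :
    ∫⁻ x in Set.Icc 5 B, ENNReal.ofReal (d * ((Real.log (x / 4)) ^ 2 * x⁻¹)) =
      ENNReal.ofReal (d * ((Real.log (B / 4) ^ 3 - Real.log (5 / 4) ^ 3) / 3)) := by
  have hcont : ContinuousOn (fun x : ℝ => (Real.log (x / 4)) ^ 2 * x⁻¹) (Set.Icc 5 B) := by
    apply ContinuousOn.mul
    · exact (((continuousOn_id.div_const 4).log
        (fun x hx => by have := hx.1; positivity)).pow 2)
    · exact continuousOn_inv₀.mono (fun x hx => by have := hx.1; simp; positivity)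
  have hftc : ∫ x in (5:ℝ)..B, (Real.log (x / 4)) ^ 2 * x⁻¹ =
      (Real.log (B / 4) ^ 3 - Real.log (5 / 4) ^ 3) / 3 := by
    have key : ∀ x ∈ Set.uIcc (5:ℝ) B, HasDerivAt (fun x : ℝ => Real.log (x / 4) ^ 3 / 3)
        ((Real.log (x / 4)) ^ 2 * x⁻¹) x := by
      intro x hx
      rw [Set.uIcc_of_le hB] at hx
      have hx0 : (0:ℝ) < x := lt_of_lt_of_le (by norm_num) hx.1
      have h1 : HasDerivAt (fun x : ℝ => Real.log (x / 4)) x⁻¹ x := by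
        have : HasDerivAt (fun x : ℝ => x / 4) (1 / 4) x := (hasDerivAt_id x).div_const 4
        have := this.log (by positivity)
        convert this using 1
        field_simp
      have h2 := (h1.fun_pow 3).div_const 3
      exact h2.congr_deriv (by norm_num; ring)
    rw [intervalIntegral.integral_eq_sub_of_hasDerivAt key ?_]
    · ring
    · exact (hcont.mono (by rw [Set.uIcc_of_le hB])).intervalIntegrable
  rw [← setLIntegral_congr Ioc_ae_eq_Icc]
  have hint : IntegrableOn (fun x : ℝ => d * ((Real.log (x / 4)) ^ 2 * x⁻¹)) (Set.Ioc 5 B) :=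
    ((continuousOn_const.mul hcont).integrableOn_Icc).mono_set Set.Ioc_subset_Icc_self
  rw [← ofReal_integral_eq_lintegral_ofReal hint]
  · congr 1
    rw [← intervalIntegral.integral_of_le hB, intervalIntegral.integral_const_mul, hftc]
  · refine (ae_restrict_iff' measurableSet_Ioc).2 (Filter.Eventually.of_forall fun y hy => ?_)
    have : (0:ℝ) < y := lt_of_lt_of_le (by norm_num) hy.1.le
    positivity

lemma lint_prod_mul {A B : Set ℝ} (hA : MeasurableSet A) (hB : MeasurableSet B)
    (g h : ℝ → ℝ≥0∞) (hg : Measurable g) (hh : Measurable h) :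
    ∫⁻ p in A ×ˢ B, g p.1 * h p.2 = (∫⁻ y in A, g y) * ∫⁻ y in B, h y := by
  rw [Measure.volume_eq_prod, ← Measure.prod_restrict]
  have hmeas : AEMeasurable (fun p : ℝ × ℝ => g p.1 * h p.2)
      ((volume.restrict A).prod (volume.restrict B)) :=
    ((hg.comp measurable_fst).mul (hh.comp measurable_snd)).aemeasurable
  rw [lintegral_prod (fun p : ℝ × ℝ => g p.1 * h p.2) hmeas]
  calc ∫⁻ x, ∫⁻ y, g x * h y ∂(volume.restrict B) ∂(volume.restrict A)
      = ∫⁻ x, g x * ∫⁻ y, h y ∂(volume.restrict B) ∂(volume.restrict A) := by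
        congr 1; funext x; exact lintegral_const_mul _ hh
    _ = _ := lintegral_mul_const _ hg


lemma lint_region (a b : ℝ) (u v : ℝ → ℝ) (hu : Measurable u) (hv : Measurable v)
    (g : ℝ → ℝ≥0∞) (hg : Measurable g) :
    ∫⁻ p in {p : ℝ × ℝ | p.1 ∈ Set.Icc a b ∧ p.2 ∈ Set.Icc (u p.1) (v p.1)}, g p.1 =
      ∫⁻ y in Set.Icc a b, g y * ENNReal.ofReal (v y - u y) := by
  set S : Set (ℝ × ℝ) := {p : ℝ × ℝ | p.1 ∈ Set.Icc a b ∧ p.2 ∈ Set.Icc (u p.1) (v p.1)} with hSdef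
  have hS : MeasurableSet S := by
    have : S = ({p : ℝ × ℝ | a ≤ p.1} ∩ {p | p.1 ≤ b}) ∩
        ({p | u p.1 ≤ p.2} ∩ {p | p.2 ≤ v p.1}) := by
      ext p; simp [hSdef, Set.mem_Icc, and_assoc]
    rw [this]
    exact (((measurableSet_le measurable_const measurable_fst).inter
      (measurableSet_le measurable_fst measurable_const)).inter
      ((measurableSet_le (hu.comp measurable_fst) measurable_snd).inter
      (measurableSet_le measurable_snd (hv.comp measurable_fst))))
  rw [← lintegral_indicator hS, Measure.volume_eq_prod]
  have hmeas : AEMeasurable (S.indicator (fun p : ℝ × ℝ => g p.1))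
      ((volume : Measure ℝ).prod volume) := by
    exact ((hg.comp measurable_fst).indicator hS).aemeasurable
  rw [lintegral_prod _ hmeas]
  have hpt : ∀ x : ℝ, (∫⁻ y, S.indicator (fun p : ℝ × ℝ => g p.1) (x, y)) =
      (Set.Icc a b).indicator (fun x => g x * ENNReal.ofReal (v x - u x)) x := by
    intro x
    by_cases hx : x ∈ Set.Icc a b
    · rw [Set.indicator_of_mem hx]
      have heq : (fun y => S.indicator (fun p : ℝ × ℝ => g p.1) (x, y)) =
          fun y => (Set.Icc (u x) (v x)).indicator (fun _ => g x) y := by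
        funext y
        by_cases hy : y ∈ Set.Icc (u x) (v x)
        · rw [Set.indicator_of_mem hy, Set.indicator_of_mem (by exact ⟨hx, hy⟩)]
        · rw [Set.indicator_of_notMem hy, Set.indicator_of_notMem (fun h => hy h.2)]
      rw [heq, lintegral_indicator measurableSet_Icc, setLIntegral_const, Real.volume_Icc]
    · rw [Set.indicator_of_notMem hx]
      have heq : (fun y => S.indicator (fun p : ℝ × ℝ => g p.1) (x, y)) = fun _ => (0:ℝ≥0∞) :=
        funext fun y => Set.indicator_of_notMem (fun h => hx h.1) _
      rw [heq, lintegral_const, zero_mul]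
  simp only [hpt]
  rw [lintegral_indicator measurableSet_Icc]

lemma linKak_lb (N : ℝ) (f : ℝ × ℝ → ℝ) (x e z : ℝ × ℝ) (he : e.1 ^ 2 + e.2 ^ 2 = 1)
    (hx : x ∈ rectSet e z N 1) :
    (volume (rectSet e z N 1))⁻¹ * ∫⁻ y in rectSet e z N 1, ENNReal.ofReal |f y| ≤
      linKak N f x := by
  unfold linKak
  refine le_iSup_of_le e (le_iSup_of_le z ?_)
  rw [iSup_pos he, iSup_pos hx]

lemma mem_rect_aux {n K r : ℝ} (hnpos : 0 < n) (hr0 : 0 < r) (hr2 : r ^ 2 = n ^ 2 + K ^ 2)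
    (p : ℝ × ℝ) (h1 : 0 ≤ n * p.1 + K * p.2) (h2 : n * p.1 + K * p.2 ≤ n * r)
    (h3 : K * p.1 - n * p.2 ≤ r) (h4 : 0 ≤ K * p.1 - n * p.2) :
    p ∈ rectSet (n / r, K / r) (K / r, -(n / r)) n 1 := by
  apply mem_rectSet (s := (n * p.1 + K * p.2) / r) (t := 1 - (K * p.1 - n * p.2) / r)
  · exact ⟨div_nonneg h1 hr0.le, by rw [div_le_iff₀ hr0]; linarith⟩
  · constructor
    · have : (K * p.1 - n * p.2) / r ≤ 1 := (div_le_one hr0).2 h3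
      linarith
    · have : 0 ≤ (K * p.1 - n * p.2) / r := div_nonneg h4 hr0.le
      linarith
  · field_simp
    linear_combination p.1 * hr2
  · field_simp
    linear_combination p.2 * hr2
set_option maxHeartbeats 2000000 in
lemma pointwise_aux (n K : ℝ) (hn2 : 2 ≤ n) (hK5 : 5 ≤ K) (hKn : K ≤ n)
    (f : ℝ × ℝ → ℝ)
    (hf : ∀ p : ℝ × ℝ, 1 ≤ p.1 → p.1 ≤ n → 1 ≤ p.2 → p.2 ≤ n →
      f p = (p.1 * p.2) ^ (-(1 / 2) : ℝ))
    (x : ℝ × ℝ) (hx : Real.sqrt (x.1 ^ 2 + x.2 ^ 2) ≤ n)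
    (h1 : (K - 1) / n * x.1 ≤ x.2) (h2 : x.2 < K / n * x.1) :
    ENNReal.ofReal (Real.log (K / 4) / Real.sqrt (n * K)) ≤ linKak n f x := by
  have hnpos : (0:ℝ) < n := by linarith
  have hKpos : (0:ℝ) < K := by linarith
  set r := Real.sqrt (n ^ 2 + K ^ 2) with hrdef
  have hr2 : r ^ 2 = n ^ 2 + K ^ 2 := Real.sq_sqrt (by positivity)
  have hr0 : 0 < r := Real.sqrt_pos.2 (by positivity)
  have hrn : n ≤ r := by nlinarith [sq_nonneg K]
  have hr2n : r ≤ 2 * n := by nlinarith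
  have h1' : (K - 1) * x.1 ≤ x.2 * n := by
    rw [div_mul_eq_mul_div, div_le_iff₀ hnpos] at h1; linarith
  have h2' : x.2 * n < K * x.1 := by
    rw [div_mul_eq_mul_div] at h2
    exact (lt_div_iff₀ hnpos).1 h2
  have hx1pos : 0 < x.1 := by nlinarith
  have hx2pos : 0 < x.2 := by nlinarith
  have hxnorm : x.1 ^ 2 + x.2 ^ 2 ≤ n ^ 2 := by
    have h := Real.sq_sqrt (show (0:ℝ) ≤ x.1 ^ 2 + x.2 ^ 2 by positivity)
    nlinarith [Real.sqrt_nonneg (x.1 ^ 2 + x.2 ^ 2)]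
  have hx1n : x.1 ≤ n := by nlinarith [sq_nonneg x.2]
  have he : ((n / r, K / r) : ℝ × ℝ).1 ^ 2 + ((n / r, K / r) : ℝ × ℝ).2 ^ 2 = 1 := by
    simp only
    field_simp
    linarith [hr2]
  have hxmem : x ∈ rectSet (n / r, K / r) (K / r, -(n / r)) n 1 := by
    apply mem_rect_aux hnpos hr0 hr2
    · nlinarith
    · have hA : 0 ≤ n * x.1 + K * x.2 := by nlinarith
      have hsq : (n * x.1 + K * x.2) ^ 2 ≤ (n * r) ^ 2 := by
        nlinarith [sq_nonneg (K * x.1 - n * x.2),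
          mul_le_mul_of_nonneg_left hxnorm (show (0:ℝ) ≤ n ^ 2 + K ^ 2 by positivity)]
      exact le_of_pow_le_pow_left₀ two_ne_zero (by positivity) hsq
    · linarith
    · linarith
  set T : Set (ℝ × ℝ) := {p : ℝ × ℝ | p.1 ∈ Set.Icc (2 * n / K) (n / 2) ∧
      p.2 ∈ Set.Icc (K * p.1 / n - 1) (K * p.1 / n)} with hTdef
  have hTmeas : MeasurableSet T := by
    have : T = ({p : ℝ × ℝ | 2 * n / K ≤ p.1} ∩ {p | p.1 ≤ n / 2}) ∩
        ({p | K * p.1 / n - 1 ≤ p.2} ∩ {p | p.2 ≤ K * p.1 / n}) := by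
      ext p; simp [hTdef, Set.mem_Icc, and_assoc]
    rw [this]
    have hm : Measurable (fun p : ℝ × ℝ => K * p.1 / n) :=
      (measurable_fst.const_mul K).div_const n
    exact (((measurableSet_le measurable_const measurable_fst).inter
      (measurableSet_le measurable_fst measurable_const)).inter
      ((measurableSet_le (hm.sub measurable_const) measurable_snd).inter
      (measurableSet_le measurable_snd hm)))
  have hTsub : T ⊆ rectSet (n / r, K / r) (K / r, -(n / r)) n 1 := by
    rintro p ⟨⟨hp1a, hp1b⟩, hp2a, hp2b⟩
    have hp1pos : 0 < p.1 := lt_of_lt_of_le (by positivity) hp1a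
    have hp1a' : 2 * n ≤ p.1 * K := (div_le_iff₀ hKpos).1 hp1a
    have hKp1 : 2 ≤ K * p.1 / n := by rw [le_div_iff₀ hnpos]; nlinarith
    have hp2pos : 1 ≤ p.2 := by linarith
    have hp2bn : p.2 * n ≤ K * p.1 := by
      have := mul_le_mul_of_nonneg_right hp2b hnpos.le
      rwa [div_mul_cancel₀ _ hnpos.ne'] at this
    have hp2an : K * p.1 - n ≤ p.2 * n := by
      have := mul_le_mul_of_nonneg_right hp2a hnpos.le
      rwa [sub_mul, one_mul, div_mul_cancel₀ _ hnpos.ne'] at this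
    apply mem_rect_aux hnpos hr0 hr2
    · nlinarith
    · have hp2K : p.2 ≤ K / 2 := by
        have hq : K * p.1 / n ≤ K / 2 := by rw [div_le_iff₀ hnpos]; nlinarith
        linarith
      nlinarith [mul_le_mul_of_nonneg_left hr2n hr0.le, hr2]
    · linarith
    · linarith
  have hT_lb : ∀ p ∈ T, ENNReal.ofReal (Real.sqrt (n / K) / p.1) ≤ ENNReal.ofReal |f p| := by
    rintro p ⟨⟨hp1a, hp1b⟩, hp2a, hp2b⟩
    have h2nK : (2:ℝ) ≤ 2 * n / K := by rw [le_div_iff₀ hKpos]; linarith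
    have hp1pos : 0 < p.1 := lt_of_lt_of_le (by linarith) hp1a
    have hp1one : 1 ≤ p.1 := by linarith
    have hp1n : p.1 ≤ n := by linarith
    have hp1a' : 2 * n ≤ p.1 * K := (div_le_iff₀ hKpos).1 hp1a
    have hKp1 : 2 ≤ K * p.1 / n := by rw [le_div_iff₀ hnpos]; nlinarith
    have hp2one : 1 ≤ p.2 := by linarith
    have hKp1n : K * p.1 / n ≤ K / 2 := by rw [div_le_iff₀ hnpos]; nlinarith
    have hp2n : p.2 ≤ n := by linarith
    have hp2bn : p.2 * n ≤ K * p.1 := by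
      have := mul_le_mul_of_nonneg_right hp2b hnpos.le
      rwa [div_mul_cancel₀ _ hnpos.ne'] at this
    rw [hf p hp1one hp1n hp2one hp2n]
    apply ENNReal.ofReal_le_ofReal
    have hpos : 0 < p.1 * p.2 := by positivity
    rw [abs_of_nonneg (Real.rpow_nonneg hpos.le _), Real.rpow_neg hpos.le,
      ← Real.sqrt_eq_rpow]
    have hsp : 0 < Real.sqrt (p.1 * p.2) := Real.sqrt_pos.2 hpos
    have key : Real.sqrt (n / K) * Real.sqrt (p.1 * p.2) ≤ p.1 := by
      rw [← Real.sqrt_mul (by positivity)]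
      have harg : n / K * (p.1 * p.2) ≤ p.1 ^ 2 := by
        rw [div_mul_eq_mul_div, div_le_iff₀ hKpos]
        nlinarith
      calc Real.sqrt (n / K * (p.1 * p.2)) ≤ Real.sqrt (p.1 ^ 2) := Real.sqrt_le_sqrt harg
        _ = p.1 := Real.sqrt_sq hp1pos.le
    rw [div_le_iff₀ hp1pos, inv_mul_eq_div, le_div_iff₀ hsp]
    exact key
  have hrect_vol : volume (rectSet (n / r, K / r) (K / r, -(n / r)) n 1) =
      ENNReal.ofReal n := by
    rw [volume_rectSet _ _ _ _ he]
    simp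
  have hab : 2 * n / K ≤ n / 2 := by
    rw [div_le_div_iff₀ hKpos (by norm_num)]
    nlinarith
  have harg : n / 2 / (2 * n / K) = K / 4 := by
    field_simp
    ring
  have hgm : Measurable (fun y : ℝ => ENNReal.ofReal (Real.sqrt (n / K) / y)) :=
    (measurable_const.div measurable_id).ennreal_ofReal
  have hu : Measurable (fun y : ℝ => K * y / n - 1) :=
    ((measurable_id.const_mul K).div_const n).sub measurable_const
  have hv : Measurable (fun y : ℝ => K * y / n) := (measurable_id.const_mul K).div_const n
  have hreg := lint_region (2 * n / K) (n / 2) (fun y : ℝ => K * y / n - 1)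
    (fun y : ℝ => K * y / n) hu hv (fun y : ℝ => ENNReal.ofReal (Real.sqrt (n / K) / y)) hgm
  simp only [show ∀ y : ℝ, K * y / n - (K * y / n - 1) = 1 from fun y => by ring,
    ENNReal.ofReal_one, mul_one] at hreg
  have hint : ENNReal.ofReal (Real.sqrt (n / K) * Real.log (K / 4)) ≤
      ∫⁻ y in rectSet (n / r, K / r) (K / r, -(n / r)) n 1, ENNReal.ofReal |f y| := by
    calc ENNReal.ofReal (Real.sqrt (n / K) * Real.log (K / 4))
        = ∫⁻ y in Set.Icc (2 * n / K) (n / 2), ENNReal.ofReal (Real.sqrt (n / K) / y) := by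
          rw [lint_const_div _ _ _ (Real.sqrt_nonneg _) (by positivity) hab, harg]
      _ = ∫⁻ p in T, ENNReal.ofReal (Real.sqrt (n / K) / p.1) := hreg.symm
      _ ≤ ∫⁻ p in T, ENNReal.ofReal |f p| := setLIntegral_mono' hTmeas hT_lb
      _ ≤ _ := lintegral_mono_set hTsub
  have hsn : 0 < Real.sqrt n := Real.sqrt_pos.2 hnpos
  have hsK : 0 < Real.sqrt K := Real.sqrt_pos.2 hKpos
  have hid : Real.log (K / 4) / Real.sqrt (n * K) =
      Real.sqrt (n / K) * Real.log (K / 4) / n := by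
    have h3 : Real.sqrt n * Real.sqrt n = n := Real.mul_self_sqrt hnpos.le
    rw [Real.sqrt_mul hnpos.le, Real.sqrt_div hnpos.le,
      div_eq_div_iff (by positivity : (0:ℝ) < Real.sqrt n * Real.sqrt K).ne' hnpos.ne']
    field_simp
    linear_combination (-(Real.log (K / 4))) * h3
  calc ENNReal.ofReal (Real.log (K / 4) / Real.sqrt (n * K))
      = ENNReal.ofReal (Real.sqrt (n / K) * Real.log (K / 4) / n) := by rw [hid]
    _ = (ENNReal.ofReal n)⁻¹ * ENNReal.ofReal (Real.sqrt (n / K) * Real.log (K / 4)) := by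
        rw [ENNReal.ofReal_div_of_pos hnpos, ENNReal.div_eq_inv_mul]
    _ ≤ (ENNReal.ofReal n)⁻¹ *
        ∫⁻ y in rectSet (n / r, K / r) (K / r, -(n / r)) n 1, ENNReal.ofReal |f y| :=
        mul_le_mul_right hint _
    _ = (volume (rectSet (n / r, K / r) (K / r, -(n / r)) n 1))⁻¹ *
        ∫⁻ y in rectSet (n / r, K / r) (K / r, -(n / r)) n 1, ENNReal.ofReal |f y| := by
        rw [hrect_vol]
    _ ≤ linKak n f x := linKak_lb n f x _ _ he hxmem

lemma lint_sq_fN (n : ℝ) (hn : 1 ≤ n) (f : ℝ × ℝ → ℝ)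
    (hfdef : f = fun p : ℝ × ℝ =>
      if 1 ≤ p.1 ∧ p.1 ≤ n ∧ 1 ≤ p.2 ∧ p.2 ≤ n then (p.1 * p.2) ^ (-(1 / 2) : ℝ) else 0) :
    ∫⁻ p : ℝ × ℝ, (‖f p‖₊ : ℝ≥0∞) ^ (2 : ℝ) =
      ENNReal.ofReal (Real.log n) * ENNReal.ofReal (Real.log n) := by
  have hpt : ∀ p : ℝ × ℝ, ((‖f p‖₊ : ℝ≥0∞)) ^ (2 : ℝ) =
      (Set.Icc 1 n ×ˢ Set.Icc 1 n).indicator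
        (fun p : ℝ × ℝ => ENNReal.ofReal (1 / p.1) * ENNReal.ofReal (1 / p.2)) p := by
    intro p
    by_cases hp : p ∈ Set.Icc (1:ℝ) n ×ˢ Set.Icc (1:ℝ) n
    · obtain ⟨⟨hp1, hp2⟩, hp3, hp4⟩ := hp
      have hpos : (0:ℝ) < p.1 * p.2 := by nlinarith
      rw [Set.indicator_of_mem (by exact ⟨⟨hp1, hp2⟩, hp3, hp4⟩), hfdef]
      simp only [if_pos (⟨hp1, hp2, hp3, hp4⟩ : 1 ≤ p.1 ∧ p.1 ≤ n ∧ 1 ≤ p.2 ∧ p.2 ≤ n)]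
      rw [← enorm_eq_nnnorm, Real.enorm_eq_ofReal (Real.rpow_nonneg hpos.le _),
        ENNReal.ofReal_rpow_of_nonneg (Real.rpow_nonneg hpos.le _) (by norm_num),
        ← Real.rpow_mul hpos.le,
        ← ENNReal.ofReal_mul (by positivity)]
      congr 1
      rw [show (-(1/2) : ℝ) * 2 = -1 by norm_num, Real.rpow_neg_one]
      field_simp
    · rw [Set.indicator_of_notMem hp, hfdef]
      simp only
      rw [if_neg (fun h => hp ⟨⟨h.1, h.2.1⟩, ⟨h.2.2.1, h.2.2.2⟩⟩)]
      simp [ENNReal.zero_rpow_of_pos]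
  simp only [hpt]
  rw [lintegral_indicator (measurableSet_Icc.prod measurableSet_Icc)]
  have hgm : Measurable (fun y : ℝ => ENNReal.ofReal (1 / y)) :=
    (measurable_const.div measurable_id).ennreal_ofReal
  rw [lint_prod_mul measurableSet_Icc measurableSet_Icc _ _ hgm hgm]
  rw [lint_const_div 1 1 n (by norm_num) one_pos hn]
  simp

lemma square_vol : volume (Set.Icc (1:ℝ) (3/2) ×ˢ Set.Icc (1:ℝ) (3/2)) =
    ENNReal.ofReal (1/2) * ENNReal.ofReal (1/2) := by
  rw [Measure.volume_eq_prod, Measure.prod_prod, Real.volume_Icc]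
  norm_num

lemma base_lb (n : ℝ) (hn2 : 2 ≤ n) (f : ℝ × ℝ → ℝ)
    (hf : ∀ p : ℝ × ℝ, 1 ≤ p.1 → p.1 ≤ n → 1 ≤ p.2 → p.2 ≤ n →
      f p = (p.1 * p.2) ^ (-(1 / 2) : ℝ)) :
    ENNReal.ofReal (1 / (16 * n ^ 2)) ≤ ∫⁻ x, linKak n f x ^ (2 : ℝ) := by
  have hnpos : (0:ℝ) < n := by linarith
  have he : (((1:ℝ),(0:ℝ)) : ℝ × ℝ).1 ^ 2 + (((1:ℝ),(0:ℝ)) : ℝ × ℝ).2 ^ 2 = 1 := by norm_num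
  have hvol : volume (rectSet (1,0) (0,1) n 1) = ENNReal.ofReal n := by
    rw [volume_rectSet _ _ _ _ he]; simp
  have hsub : Set.Icc (1:ℝ) 2 ×ˢ Set.Icc (1:ℝ) 2 ⊆ rectSet (1,0) (0,1) n 1 := by
    rintro p ⟨⟨h1, h2⟩, h3, h4⟩
    exact mem_rectSet (s := p.1) (t := p.2 - 1) ⟨by linarith, by linarith⟩
      ⟨by linarith, by linarith⟩ (by simp) (by simp)
  have hlow : ∀ p ∈ Set.Icc (1:ℝ) 2 ×ˢ Set.Icc (1:ℝ) 2,
      ENNReal.ofReal (1/2 : ℝ) ≤ ENNReal.ofReal |f p| := by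
    rintro p ⟨⟨h1, h2⟩, h3, h4⟩
    rw [hf p h1 (by linarith) h3 (by linarith)]
    apply ENNReal.ofReal_le_ofReal
    have hpos : (0:ℝ) < p.1 * p.2 := by nlinarith
    rw [abs_of_nonneg (Real.rpow_nonneg hpos.le _), Real.rpow_neg hpos.le,
      ← Real.sqrt_eq_rpow]
    have hle : Real.sqrt (p.1 * p.2) ≤ 2 := by
      calc Real.sqrt (p.1 * p.2) ≤ Real.sqrt (2 ^ 2) := Real.sqrt_le_sqrt (by nlinarith)
        _ = 2 := Real.sqrt_sq (by norm_num)
    calc (1/2 : ℝ) = 2⁻¹ := by norm_num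
      _ ≤ (Real.sqrt (p.1 * p.2))⁻¹ := inv_anti₀ (Real.sqrt_pos.2 hpos) hle
  have hlin : ∀ x ∈ Set.Icc (1:ℝ) (3/2) ×ˢ Set.Icc (1:ℝ) (3/2),
      ENNReal.ofReal (1 / (2 * n)) ≤ linKak n f x := by
    rintro x ⟨⟨h1, h2⟩, h3, h4⟩
    have hxmem : x ∈ rectSet (1,0) (0,1) n 1 :=
      mem_rectSet (s := x.1) (t := x.2 - 1) ⟨by linarith, by linarith⟩
        ⟨by linarith, by linarith⟩ (by simp) (by simp)
    have hstep : ENNReal.ofReal (1/2 : ℝ) ≤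
        ∫⁻ y in rectSet (1,0) (0,1) n 1, ENNReal.ofReal |f y| := by
      have h0 : ENNReal.ofReal (1/2 : ℝ) =
          ∫⁻ p in Set.Icc (1:ℝ) 2 ×ˢ Set.Icc (1:ℝ) 2, ENNReal.ofReal (1/2 : ℝ) := by
        rw [setLIntegral_const, Measure.volume_eq_prod, Measure.prod_prod, Real.volume_Icc]
        norm_num
      rw [h0]
      calc ∫⁻ p in Set.Icc (1:ℝ) 2 ×ˢ Set.Icc (1:ℝ) 2, ENNReal.ofReal (1/2 : ℝ)
          ≤ ∫⁻ p in Set.Icc (1:ℝ) 2 ×ˢ Set.Icc (1:ℝ) 2, ENNReal.ofReal |f p| :=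
            setLIntegral_mono' (measurableSet_Icc.prod measurableSet_Icc) hlow
        _ ≤ _ := lintegral_mono_set hsub
    calc ENNReal.ofReal (1 / (2 * n))
        = (ENNReal.ofReal n)⁻¹ * ENNReal.ofReal (1/2 : ℝ) := by
          rw [← ENNReal.div_eq_inv_mul, ← ENNReal.ofReal_div_of_pos hnpos]
          congr 1
          field_simp
        _ ≤ (ENNReal.ofReal n)⁻¹ *
            ∫⁻ y in rectSet (1,0) (0,1) n 1, ENNReal.ofReal |f y| :=
          mul_le_mul_right hstep _
        _ = (volume (rectSet (1,0) (0,1) n 1))⁻¹ *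
            ∫⁻ y in rectSet (1,0) (0,1) n 1, ENNReal.ofReal |f y| := by rw [hvol]
        _ ≤ linKak n f x := linKak_lb n f x _ _ he hxmem
  have hGle : (Set.Icc (1:ℝ) (3/2) ×ˢ Set.Icc (1:ℝ) (3/2)).indicator
      (fun _ => ENNReal.ofReal (1 / (2 * n)) ^ (2:ℝ)) ≤ fun x => linKak n f x ^ (2:ℝ) := by
    intro x
    by_cases hx : x ∈ Set.Icc (1:ℝ) (3/2) ×ˢ Set.Icc (1:ℝ) (3/2)
    · rw [Set.indicator_of_mem hx]
      exact ENNReal.rpow_le_rpow (hlin x hx) (by norm_num)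
    · rw [Set.indicator_of_notMem hx]; exact zero_le
  calc ENNReal.ofReal (1 / (16 * n ^ 2))
      = ENNReal.ofReal (1 / (2 * n)) ^ (2:ℝ) *
        volume (Set.Icc (1:ℝ) (3/2) ×ˢ Set.Icc (1:ℝ) (3/2)) := by
        rw [square_vol, ENNReal.ofReal_rpow_of_nonneg (by positivity) (by norm_num),
          ← ENNReal.ofReal_mul (by positivity), ← ENNReal.ofReal_mul (by positivity)]
        congr 1
        rw [Real.rpow_two]
        field_simp
        ring
    _ = ∫⁻ x, (Set.Icc (1:ℝ) (3/2) ×ˢ Set.Icc (1:ℝ) (3/2)).indicator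
        (fun _ => ENNReal.ofReal (1 / (2 * n)) ^ (2:ℝ)) x := by
        rw [lintegral_indicator (measurableSet_Icc.prod measurableSet_Icc),
          setLIntegral_const]
    _ ≤ ∫⁻ x, linKak n f x ^ (2:ℝ) := lintegral_mono hGle

set_option maxHeartbeats 2000000 in
lemma large_lb (n : ℝ) (hn : 256 ≤ n) (f : ℝ × ℝ → ℝ)
    (hf : ∀ p : ℝ × ℝ, 1 ≤ p.1 → p.1 ≤ n → 1 ≤ p.2 → p.2 ≤ n →
      f p = (p.1 * p.2) ^ (-(1 / 2) : ℝ)) :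
    ENNReal.ofReal ((1/1000000000 : ℝ) * Real.log n ^ (3 : ℕ)) ≤
      ∫⁻ x, linKak n f x ^ (2 : ℝ) := by
  have hn2 : (2:ℝ) ≤ n := by linarith
  have hnpos : (0:ℝ) < n := by linarith
  set U : Set (ℝ × ℝ) := Set.Icc (n/2) (7*n/10) ×ˢ Set.Icc (5:ℝ) (n/4) with hUdef
  have hstep : ∀ x ∈ U, ENNReal.ofReal (Real.log (x.2/4) / Real.sqrt (3*n*x.2)) ≤
      linKak n f x := by
    rintro x ⟨⟨ha1, ha2⟩, hb1, hb2⟩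
    have hx1pos : (0:ℝ) < x.1 := by linarith
    have hx2pos : (0:ℝ) < x.2 := by linarith
    set t := n * x.2 / x.1 with ht
    have htpos : 0 ≤ t := by positivity
    have ht_lb : 10/7 * x.2 ≤ t := by rw [le_div_iff₀ hx1pos]; nlinarith
    have ht_ub : t ≤ 2 * x.2 := by rw [div_le_iff₀ hx1pos]; nlinarith
    set k : ℕ := ⌊t⌋₊ + 1 with hk
    have hk_cast : (k:ℝ) = (⌊t⌋₊ : ℝ) + 1 := by push_cast [hk]; ring
    have hfl_le : (⌊t⌋₊:ℝ) ≤ t := Nat.floor_le htpos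
    have hlt : t < (⌊t⌋₊:ℝ) + 1 := Nat.lt_floor_add_one t
    have hk_gt_t : t < (k:ℝ) := by rw [hk_cast]; exact hlt
    have hk_le : (k:ℝ) ≤ t + 1 := by rw [hk_cast]; linarith
    have hk_gt_x2 : x.2 < (k:ℝ) := by nlinarith
    have hk7 : (7:ℝ) < (k:ℝ) := by nlinarith
    have hk5 : 5 ≤ k := by
      have : (7:ℕ) < k := by exact_mod_cast hk7
      omega
    have hk3x : (k:ℝ) ≤ 3 * x.2 := by nlinarith
    have hkn : (k:ℝ) ≤ n := by nlinarith
    have hnrm : Real.sqrt (x.1 ^ 2 + x.2 ^ 2) ≤ n := by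
      calc Real.sqrt (x.1 ^ 2 + x.2 ^ 2) ≤ Real.sqrt (n ^ 2) :=
          Real.sqrt_le_sqrt (by nlinarith)
        _ = n := Real.sqrt_sq hnpos.le
    have htx : t * x.1 = n * x.2 := div_mul_cancel₀ _ hx1pos.ne'
    have hsec1 : ((k:ℝ) - 1)/n * x.1 ≤ x.2 := by
      rw [div_mul_eq_mul_div, div_le_iff₀ hnpos, hk_cast]
      nlinarith [mul_le_mul_of_nonneg_right hfl_le hx1pos.le]
    have hsec2 : x.2 < (k:ℝ)/n * x.1 := by
      rw [div_mul_eq_mul_div, lt_div_iff₀ hnpos]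
      nlinarith [mul_lt_mul_of_pos_right hk_gt_t hx1pos]
    have hbase := pointwise_aux n (k:ℝ) hn2 (by exact_mod_cast hk5) hkn f hf x hnrm hsec1 hsec2
    refine le_trans (ENNReal.ofReal_le_ofReal ?_) hbase
    have hlogpos : 0 ≤ Real.log (x.2/4) := Real.log_nonneg (by linarith)
    have hlog : Real.log (x.2/4) ≤ Real.log ((k:ℝ)/4) :=
      Real.log_le_log (by positivity) (by linarith)
    have hsq : Real.sqrt (n * k) ≤ Real.sqrt (3*n*x.2) := Real.sqrt_le_sqrt (by nlinarith)
    have hsqpos : 0 < Real.sqrt (n * k) := Real.sqrt_pos.2 (by positivity)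
    exact div_le_div₀ (by linarith) hlog hsqpos hsq
  have hUmeas : MeasurableSet U := measurableSet_Icc.prod measurableSet_Icc
  have hGle : U.indicator (fun p : ℝ × ℝ =>
      ENNReal.ofReal ((1/(3*n)) * (Real.log (p.2/4) ^ 2 * p.2⁻¹))) ≤
      fun x => linKak n f x ^ (2:ℝ) := by
    intro x
    by_cases hx : x ∈ U
    · rw [Set.indicator_of_mem hx]
      obtain ⟨⟨ha1, ha2⟩, hb1, hb2⟩ := hx
      have hx2pos : (0:ℝ) < x.2 := by linarith
      have hlogpos : 0 ≤ Real.log (x.2/4) := Real.log_nonneg (by linarith)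
      have h2 := ENNReal.rpow_le_rpow (hstep x ⟨⟨ha1, ha2⟩, hb1, hb2⟩)
        (by norm_num : (0:ℝ) ≤ 2)
      refine le_trans (le_of_eq ?_) h2
      rw [ENNReal.ofReal_rpow_of_nonneg (by positivity) (by norm_num)]
      congr 1
      rw [Real.rpow_two, div_pow, Real.sq_sqrt (by positivity)]
      field_simp
    · rw [Set.indicator_of_notMem hx]; exact zero_le
  have hgm2 : Measurable (fun y : ℝ =>
      ENNReal.ofReal ((1/(3*n)) * (Real.log (y/4) ^ 2 * y⁻¹))) := by
    apply Measurable.ennreal_ofReal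
    exact (measurable_const.mul (((Real.measurable_log.comp (measurable_id.div_const 4)).pow_const 2).mul
      measurable_inv))
  have hInt : ∫⁻ x, U.indicator (fun p : ℝ × ℝ =>
      ENNReal.ofReal ((1/(3*n)) * (Real.log (p.2/4) ^ 2 * p.2⁻¹))) x =
      ENNReal.ofReal (n/5) *
        ENNReal.ofReal ((1/(3*n)) * ((Real.log (n/4/4) ^ 3 - Real.log (5/4) ^ 3)/3)) := by
    rw [lintegral_indicator hUmeas, hUdef]
    have hprod := lint_prod_mul (measurableSet_Icc (a := n/2) (b := 7*n/10))
      (measurableSet_Icc (a := (5:ℝ)) (b := n/4)) (fun _ => (1:ℝ≥0∞))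
      (fun y => ENNReal.ofReal ((1/(3*n)) * (Real.log (y/4) ^ 2 * y⁻¹)))
      measurable_const hgm2
    simp only [one_mul] at hprod
    rw [hprod, setLIntegral_one, Real.volume_Icc,
      lint_logsq (1/(3*n)) (n/4) (by positivity) (by linarith)]
    congr 2
    ring
  calc ENNReal.ofReal ((1/1000000000 : ℝ) * Real.log n ^ (3 : ℕ))
      ≤ ENNReal.ofReal ((n/5) * ((1/(3*n)) * ((Real.log (n/4/4) ^ 3 - Real.log (5/4) ^ 3)/3))) := by
        apply ENNReal.ofReal_le_ofReal
        have h44 : n/4/4 = n/16 := by ring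
        rw [h44]
        have hsqrtn : (16:ℝ) ≤ Real.sqrt n := by
          rw [show (16:ℝ) = Real.sqrt (16^2) from (Real.sqrt_sq (by norm_num)).symm]
          exact Real.sqrt_le_sqrt (by nlinarith)
        have hsq2 : Real.sqrt n * Real.sqrt n = n := Real.mul_self_sqrt hnpos.le
        have h16 : Real.sqrt n ≤ n/16 := by rw [le_div_iff₀ (by norm_num : (0:ℝ) < 16)]; nlinarith
        have hhalf : Real.log n / 2 ≤ Real.log (n/16) := by
          rw [← Real.log_sqrt hnpos.le]
          exact Real.log_le_log (by positivity) h16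
        have hlogn1 : (1:ℝ) ≤ Real.log n := by
          rw [Real.le_log_iff_exp_le hnpos]
          calc Real.exp 1 ≤ 2.7182818286 := Real.exp_one_lt_d9.le
            _ ≤ n := by linarith
        have hlognn : (0:ℝ) ≤ Real.log n := by linarith
        have h3 : (Real.log n / 2) ^ 3 ≤ Real.log (n/16) ^ 3 :=
          pow_le_pow_left₀ (by positivity) hhalf 3
        have hlog54 : Real.log (5/4) ≤ 1/4 := by
          have := Real.log_le_sub_one_of_pos (by norm_num : (0:ℝ) < 5/4)
          linarith
        have hlog54n : 0 ≤ Real.log (5/4) := Real.log_nonneg (by norm_num)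
        have h54 : Real.log (5/4) ^ 3 ≤ 1/64 := by
          have := pow_le_pow_left₀ hlog54n hlog54 3
          nlinarith [this]
        have hcube1 : (1:ℝ) ≤ Real.log n ^ 3 := by
          calc (1:ℝ) = 1 ^ 3 := by norm_num
            _ ≤ Real.log n ^ 3 := pow_le_pow_left₀ (by norm_num) hlogn1 3
        have hexp : (n/5) * ((1/(3*n)) * ((Real.log (n/16) ^ 3 - Real.log (5/4) ^ 3)/3)) =
            (Real.log (n/16) ^ 3 - Real.log (5/4) ^ 3) / 45 := by
          field_simp
          ring
        rw [hexp]
        nlinarith [h3]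
      _ = ENNReal.ofReal (n/5) *
          ENNReal.ofReal ((1/(3*n)) * ((Real.log (n/4/4) ^ 3 - Real.log (5/4) ^ 3)/3)) := by
        rw [← ENNReal.ofReal_mul (by positivity)]
      _ = ∫⁻ x, U.indicator (fun p : ℝ × ℝ =>
          ENNReal.ofReal ((1/(3*n)) * (Real.log (p.2/4) ^ 2 * p.2⁻¹))) x := hInt.symm
      _ ≤ ∫⁻ x, linKak n f x ^ (2:ℝ) := lintegral_mono hGle

lemma eLpNorm_fN (n : ℝ) (hn : 1 ≤ n) (f : ℝ × ℝ → ℝ)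
    (hfdef : f = fun p : ℝ × ℝ =>
      if 1 ≤ p.1 ∧ p.1 ≤ n ∧ 1 ≤ p.2 ∧ p.2 ≤ n then (p.1 * p.2) ^ (-(1 / 2) : ℝ) else 0) :
    eLpNorm f 2 volume = ENNReal.ofReal (Real.log n) := by
  have hlogn : 0 ≤ Real.log n := Real.log_nonneg hn
  rw [eLpNorm_eq_lintegral_rpow_enorm_toReal (by norm_num) (by norm_num)]
  simp only [ENNReal.toReal_ofNat, enorm_eq_nnnorm]
  rw [lint_sq_fN n hn f hfdef, ← ENNReal.ofReal_mul hlogn,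
    ENNReal.ofReal_rpow_of_nonneg (by positivity) (by norm_num)]
  congr 1
  rw [show Real.log n * Real.log n = Real.log n ^ (2:ℝ) by
    rw [Real.rpow_two]; ring]
  rw [← Real.rpow_mul hlogn]
  norm_num


/-- for the product-type function `f_N(y,z) = (yz)^{-1/2} χ_{[1,N]²}`
(with `‖f_N‖₂ = log N`), the fixed-scale Kakeya maximal function satisfies the pointwise
lower bound `M_{𝓡_{1,N}} f_N(x) ≥ c log(k/4)/√(Nk)` in the angular sector indexed by `k`,
and hence `‖M_{𝓡_{1,N}} f_N‖₂² ≥ c (log N)³`, i.e.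
`‖M_{𝓡_{1,N}} f_N‖₂ ≥ c (log N)^{1/2} ‖f_N‖₂`. -/
theorem statement14 :
    ∃ c : ℝ, 0 < c ∧ ∀ N : ℕ, 2 ≤ N →
      ∀ f : ℝ × ℝ → ℝ,
      f = (fun p : ℝ × ℝ =>
        if 1 ≤ p.1 ∧ p.1 ≤ (N : ℝ) ∧ 1 ≤ p.2 ∧ p.2 ≤ (N : ℝ)
        then (p.1 * p.2) ^ (-(1 / 2) : ℝ) else 0) →
      eLpNorm f 2 volume = ENNReal.ofReal (Real.log N) ∧
      (∀ (k : ℕ) (x : ℝ × ℝ), 5 ≤ k → (k : ℝ) ≤ N → nrm2 x ≤ N →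
        ((k : ℝ) - 1) / N * x.1 ≤ x.2 → x.2 < (k : ℝ) / N * x.1 →
        ENNReal.ofReal (c * Real.log ((k : ℝ) / 4) / Real.sqrt ((N : ℝ) * k)) ≤
          linKak N f x) ∧
      ENNReal.ofReal (c * Real.log N ^ (3 : ℕ)) ≤ (∫⁻ x, linKak N f x ^ (2 : ℝ)) ∧
      ENNReal.ofReal (c * Real.log N ^ ((1 : ℝ) / 2)) * eLpNorm f 2 volume ≤
        (∫⁻ x, linKak N f x ^ (2 : ℝ)) ^ ((1 : ℝ) / 2) := by
  refine ⟨1/1000000000, by norm_num, ?_⟩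
  set c : ℝ := 1/1000000000 with hc
  have hcpos : (0:ℝ) < c := by norm_num
  intro N hN2 f hfdef
  have hn2 : (2:ℝ) ≤ (N:ℝ) := by exact_mod_cast hN2
  have hn1 : (1:ℝ) ≤ (N:ℝ) := by linarith
  have hnpos : (0:ℝ) < (N:ℝ) := by linarith
  have hf' : ∀ p : ℝ × ℝ, 1 ≤ p.1 → p.1 ≤ (N:ℝ) → 1 ≤ p.2 → p.2 ≤ (N:ℝ) →
      f p = (p.1 * p.2) ^ (-(1 / 2) : ℝ) := by
    intro p h1 h2 h3 h4
    simp only [hfdef]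
    exact if_pos ⟨h1, h2, h3, h4⟩
  have hL : eLpNorm f 2 volume = ENNReal.ofReal (Real.log (N:ℝ)) := eLpNorm_fN _ hn1 f hfdef
  have hlog2 : (0:ℝ) < Real.log (N:ℝ) := Real.log_pos (by exact_mod_cast hN2)
  -- Part 2
  have hpt : ∀ (k : ℕ) (x : ℝ × ℝ), 5 ≤ k → (k : ℝ) ≤ (N:ℝ) → nrm2 x ≤ (N:ℝ) →
      ((k : ℝ) - 1) / (N:ℝ) * x.1 ≤ x.2 → x.2 < (k : ℝ) / (N:ℝ) * x.1 →
      ENNReal.ofReal (c * Real.log ((k : ℝ) / 4) / Real.sqrt ((N : ℝ) * k)) ≤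
        linKak (N:ℝ) f x := by
    intro k x hk5 hkN hxn h1 h2
    have hk5' : (5:ℝ) ≤ (k:ℝ) := by exact_mod_cast hk5
    have hbase := pointwise_aux (N:ℝ) (k:ℝ) hn2 hk5' hkN f hf' x hxn h1 h2
    refine le_trans (ENNReal.ofReal_le_ofReal ?_) hbase
    have hlogk : 0 ≤ Real.log ((k:ℝ)/4) := Real.log_nonneg (by linarith)
    have hsq : 0 < Real.sqrt ((N:ℝ) * k) := Real.sqrt_pos.2 (by positivity)
    apply div_le_div₀ hlogk ?_ hsq le_rfl
    nlinarith
  -- Part 3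
  have hI : ENNReal.ofReal (c * Real.log (N:ℝ) ^ (3 : ℕ)) ≤
      ∫⁻ x, linKak (N:ℝ) f x ^ (2 : ℝ) := by
    by_cases hbig : (256:ℝ) ≤ (N:ℝ)
    · refine le_trans (ENNReal.ofReal_le_ofReal ?_) (large_lb (N:ℝ) hbig f hf')
      exact le_of_eq rfl
    · push_neg at hbig
      refine le_trans (ENNReal.ofReal_le_ofReal ?_) (base_lb (N:ℝ) hn2 f hf')
      -- c (log N)^3 ≤ 1/(16 N²) for N < 256
      have hlogub : Real.log (N:ℝ) ≤ 6 := by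
        have h2lt : Real.log (N:ℝ) ≤ Real.log 256 := Real.log_le_log hnpos (by linarith)
        have : Real.log 256 = 8 * Real.log 2 := by
          rw [show (256:ℝ) = 2 ^ 8 by norm_num, Real.log_pow]
          push_cast; ring
        nlinarith [Real.log_two_lt_d9]
      have hlogpos : 0 ≤ Real.log (N:ℝ) := hlog2.le
      have hcube : Real.log (N:ℝ) ^ 3 ≤ 216 := by
        have := pow_le_pow_left₀ hlogpos hlogub 3
        nlinarith [this]
      have hmul : Real.log (N:ℝ) ^ 3 * (N:ℝ) ^ 2 ≤ 216 * 65536 :=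
        mul_le_mul hcube (by nlinarith) (sq_nonneg _) (by norm_num)
      rw [hc, le_div_iff₀ (by positivity)]
      have h0 : (0:ℝ) ≤ Real.log (N:ℝ) ^ 3 := by positivity
      nlinarith [hmul, h0, sq_nonneg ((N:ℝ))]
  refine ⟨hL, hpt, hI, ?_⟩
  -- Part 4
  rw [hL]
  have hstep := ENNReal.rpow_le_rpow hI (by norm_num : (0:ℝ) ≤ 1/2)
  refine le_trans ?_ hstep
  rw [ENNReal.ofReal_rpow_of_nonneg (by positivity) (by norm_num),
    ← ENNReal.ofReal_mul (by positivity)]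
  apply ENNReal.ofReal_le_ofReal
  set L := Real.log (N:ℝ) with hLdef
  have hLpos : 0 < L := hlog2
  rw [Real.mul_rpow hcpos.le (by positivity), ← Real.rpow_natCast L 3,
    ← Real.rpow_mul hLpos.le]
  rw [mul_assoc,
    show ((3:ℕ):ℝ) * ((1:ℝ)/2) = (1:ℝ)/2 + 1 by push_cast; norm_num,
    Real.rpow_add hLpos, Real.rpow_one]
  apply mul_le_mul_of_nonneg_right ?_ (by positivity)
  rw [← Real.sqrt_eq_rpow]
  have hsc : Real.sqrt c ≤ 1 := by
    rw [show (1:ℝ) = Real.sqrt 1 by simp]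
    exact Real.sqrt_le_sqrt (by norm_num)
  nlinarith [Real.sq_sqrt hcpos.le, Real.sqrt_nonneg c, hsc]
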